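/- arXiv:2503.17312 — 4 statements merged into one kernel-verified Lean document; each statement's English description precedes it below -/
import Mathlib

section
/- Let (X,d) be a geodesic metric space, and let a, b, c be three points in X. Suppose p and q are points on a geodesic segment [a,c] such that each of p and q is within distance r of both geodesic segments [a,b] and [b,c], and p lies between a and q on [a,c]. Then d(p,q) ≤ 2r. -/
/-- A geodesic segment from `a` to `b`, parametrized by arclength on `[0, dist a b]`. -/
def GeodSeg {X : Type*} [MetricSpace X] (f : ℝ → X) (a b : X) : Prop :=
  f 0 = a ∧ f (dist a b) = b ∧
    ∀ s ∈ Set.Icc (0:ℝ) (dist a b), ∀ t ∈ Set.Icc (0:ℝ) (dist a b),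
      dist (f s) (f t) = |s - t|

/-- A geodesic metric space: any two points are joined by a geodesic segment. -/
def GeodesicSpace (X : Type*) [MetricSpace X] : Prop :=
  ∀ a b : X, ∃ f : ℝ → X, GeodSeg f a b

/-- Every geodesic triangle (with vertices in `X`) is `δ`-slim: each side lies in the
closed `δ`-neighbourhood of the union of the other two sides. -/
def SlimTriangles (X : Type*) [MetricSpace X] (δ : ℝ) : Prop :=
  ∀ (a b c : X) (f g h : ℝ → X), GeodSeg f a b → GeodSeg g b c → GeodSeg h a c →
    ∀ s ∈ Set.Icc (0:ℝ) (dist a c),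
      ∃ w ∈ (f '' Set.Icc (0:ℝ) (dist a b)) ∪ (g '' Set.Icc (0:ℝ) (dist b c)),
        dist (h s) w ≤ δ

/-- A bi-infinite geodesic line. -/
def IsGeodLine {X : Type*} [MetricSpace X] (γ : ℝ → X) : Prop :=
  ∀ s t : ℝ, dist (γ s) (γ t) = |s - t|

/-- A geodesic ray (isometric on `[0,∞)`). -/
def IsGeodRay {X : Type*} [MetricSpace X] (f : ℝ → X) : Prop :=
  ∀ s t : ℝ, 0 ≤ s → 0 ≤ t → dist (f s) (f t) = |s - t|

/-- Two lines are asymptotic at `-∞` (they determine the same ideal point `ξ = γ(-∞)`). -/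
def AsympNeg {X : Type*} [MetricSpace X] (γ ρ : ℝ → X) : Prop :=
  ∃ C : ℝ, ∀ t : ℝ, t ≤ 0 → dist (γ t) (ρ t) ≤ C

/-- Two lines are asymptotic at `+∞`. -/
def AsympPos {X : Type*} [MetricSpace X] (γ ρ : ℝ → X) : Prop :=
  ∃ C : ℝ, ∀ t : ℝ, 0 ≤ t → dist (γ t) (ρ t) ≤ C

/-- The shadow of `Z ⊆ X` relative to the ideal point `ξ = ρ(-∞)`: the collection of
geodesic lines emanating from `ξ` (i.e. asymptotic to `ρ` at `-∞`) that meet `Z`;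
such lines represent the boundary points of `O_ξ(Z)` via their endpoints at `+∞`. -/
def Shadow {X : Type*} [MetricSpace X] (ρ : ℝ → X) (Z : Set X) : Set (ℝ → X) :=
  {γ | IsGeodLine γ ∧ AsympNeg γ ρ ∧ ∃ t : ℝ, γ t ∈ Z}

/-- Slimness for ideal triangles with one ideal vertex `ξ = γ₁(-∞) = γ₂(-∞)` and two
finite vertices `γ₁ s₁`, `γ₂ s₂`: each side lies in the closed `δ`-neighbourhood of the
union of the other two. -/
def SlimIdealTriangles (X : Type*) [MetricSpace X] (δ : ℝ) : Prop :=
  ∀ (γ₁ γ₂ : ℝ → X), IsGeodLine γ₁ → IsGeodLine γ₂ → AsympNeg γ₂ γ₁ →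
    ∀ (s₁ s₂ : ℝ) (f : ℝ → X), GeodSeg f (γ₁ s₁) (γ₂ s₂) →
      (∀ t ≤ s₁, ∃ w ∈ (γ₂ '' Set.Iic s₂) ∪
          (f '' Set.Icc (0:ℝ) (dist (γ₁ s₁) (γ₂ s₂))), dist (γ₁ t) w ≤ δ) ∧
      (∀ t ≤ s₂, ∃ w ∈ (γ₁ '' Set.Iic s₁) ∪
          (f '' Set.Icc (0:ℝ) (dist (γ₁ s₁) (γ₂ s₂))), dist (γ₂ t) w ≤ δ) ∧
      (∀ u ∈ Set.Icc (0:ℝ) (dist (γ₁ s₁) (γ₂ s₂)),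
        ∃ w ∈ (γ₁ '' Set.Iic s₁) ∪ (γ₂ '' Set.Iic s₂), dist (f u) w ≤ δ)

/-- In a geodesic metric space, if `p = fac sp` and `q = fac sq` are points on a
geodesic segment `[a,c]` (with `p` between `a` and `q`), each within distance `r` of both
geodesic segments `[a,b]` and `[b,c]`, then `d(p,q) ≤ 2r`. -/
theorem stmt_0 {X : Type*} [MetricSpace X] (hX : GeodesicSpace X)
    (r : ℝ) (hr : 0 ≤ r) (a b c : X) (fab fbc fac : ℝ → X)
    (hab : GeodSeg fab a b) (hbc : GeodSeg fbc b c) (hac : GeodSeg fac a c)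
    (sp sq : ℝ) (hsp : sp ∈ Set.Icc (0:ℝ) (dist a c)) (hsq : sq ∈ Set.Icc (0:ℝ) (dist a c))
    (hbetween : sp ≤ sq)
    (hp1 : ∃ s ∈ Set.Icc (0:ℝ) (dist a b), dist (fac sp) (fab s) ≤ r)
    (hp2 : ∃ s ∈ Set.Icc (0:ℝ) (dist b c), dist (fac sp) (fbc s) ≤ r)
    (hq1 : ∃ s ∈ Set.Icc (0:ℝ) (dist a b), dist (fac sq) (fab s) ≤ r)
    (hq2 : ∃ s ∈ Set.Icc (0:ℝ) (dist b c), dist (fac sq) (fbc s) ≤ r) :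
    dist (fac sp) (fac sq) ≤ 2 * r := by
  obtain ⟨s, hs, hqS⟩ := hq1
  obtain ⟨t, ht, hpT⟩ := hp2
  obtain ⟨hab0, hab1, habI⟩ := hab
  obtain ⟨hbc0, hbc1, hbcI⟩ := hbc
  obtain ⟨hac0, hac1, hacI⟩ := hac
  have h0ab : (0:ℝ) ∈ Set.Icc (0:ℝ) (dist a b) := ⟨le_refl _, dist_nonneg⟩
  have hEab : dist a b ∈ Set.Icc (0:ℝ) (dist a b) := ⟨dist_nonneg, le_refl _⟩
  have h0bc : (0:ℝ) ∈ Set.Icc (0:ℝ) (dist b c) := ⟨le_refl _, dist_nonneg⟩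
  have hEbc : dist b c ∈ Set.Icc (0:ℝ) (dist b c) := ⟨dist_nonneg, le_refl _⟩
  have haS : dist a (fab s) = s := by
    rw [← hab0, habI 0 h0ab s hs, zero_sub, abs_neg, abs_of_nonneg hs.1]
  have hSb : dist (fab s) b = dist a b - s := by
    have h := habI s hs (dist a b) hEab
    rw [hab1] at h
    rw [h, abs_of_nonpos (by linarith [hs.2])]; ring
  have hbT : dist b (fbc t) = t := by
    rw [← hbc0, hbcI 0 h0bc t ht, zero_sub, abs_neg, abs_of_nonneg ht.1]
  have hTc : dist (fbc t) c = dist b c - t := by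
    have h := hbcI t ht (dist b c) hEbc
    rw [hbc1] at h
    rw [h, abs_of_nonpos (by linarith [ht.2])]; ring
  have haP : dist a (fac sp) = sp := by
    rw [← hac0, hacI 0 ⟨le_refl _, dist_nonneg⟩ sp hsp, zero_sub, abs_neg,
      abs_of_nonneg hsp.1]
  have haQ : dist a (fac sq) = sq := by
    rw [← hac0, hacI 0 ⟨le_refl _, dist_nonneg⟩ sq hsq, zero_sub, abs_neg,
      abs_of_nonneg hsq.1]
  have hPc : dist (fac sp) c = dist a c - sp := by
    have h := hacI sp hsp (dist a c) ⟨dist_nonneg, le_refl _⟩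
    rw [hac1] at h
    rw [h, abs_of_nonpos (by linarith [hsp.2])]; ring
  have hQc : dist (fac sq) c = dist a c - sq := by
    have h := hacI sq hsq (dist a c) ⟨dist_nonneg, le_refl _⟩
    rw [hac1] at h
    rw [h, abs_of_nonpos (by linarith [hsq.2])]; ring
  have hPQ : dist (fac sp) (fac sq) = sq - sp := by
    rw [hacI sp hsp sq hsq, abs_of_nonpos (by linarith)]
    ring
  -- triangle inequalities
  have T1 : dist a (fac sq) ≤ dist a (fab s) + dist (fab s) (fac sq) := dist_triangle _ _ _
  have T1' : dist (fab s) (fac sq) = dist (fac sq) (fab s) := dist_comm _ _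
  have T2 : dist a b ≤ dist a (fac sp) + dist (fac sp) b := dist_triangle _ _ _
  have T2' : dist (fac sp) b ≤ dist (fac sp) (fbc t) + dist (fbc t) b := dist_triangle _ _ _
  have T2'' : dist (fbc t) b = dist b (fbc t) := dist_comm _ _
  have T3 : dist (fac sp) c ≤ dist (fac sp) (fbc t) + dist (fbc t) c := dist_triangle _ _ _
  have T4 : dist b c ≤ dist b (fac sq) + dist (fac sq) c := dist_triangle _ _ _
  have T4' : dist b (fac sq) ≤ dist b (fab s) + dist (fab s) (fac sq) := dist_triangle _ _ _
  have T4'' : dist b (fab s) = dist (fab s) b := dist_comm _ _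
  linarith
end

section
/- Let X be a proper δ-hyperbolic geodesic space with Gromov boundary ∂X, ξ ∈ ∂X a base point, and R, R' > 2δ. Then the ring structures R(ξ,R) and R(ξ,R') on ∂X are equivalent: there is a constant C₅ = e^{R+R'+2δ} ≥ 1 such that for every t-ring O_ξB(x₁,R) ⊆ O_ξB(x₂,R) in R(ξ,R) there exist points x₁', x₂' on the same geodesic with O_ξB(x₁',R') ⊆ O_ξB(x₁,R) ⊆ O_ξB(x₂,R) ⊆ O_ξB(x₂',R') and d(x₁',x₂') = ln(C₅ t). -/
/-- equivalence of ring structures `R(ξ,R)` and `R(ξ,R')`.  Given a `t`-ring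
`O_ξB(c s₁, R) ⊆ O_ξB(c s₂, R)` (points on a geodesic line `c` from `ξ = c(-∞)`, `c s₂`
closer to `ξ`, `d(c s₁, c s₂) = ln t`), there exist points `c s₁', c s₂'` on the same
geodesic with `O_ξB(c s₁',R') ⊆ O_ξB(c s₁,R) ⊆ O_ξB(c s₂,R) ⊆ O_ξB(c s₂',R')` and
`d(c s₁', c s₂') = ln (C₅ t)` where `C₅ = e^{R+R'+2δ}`. -/
theorem stmt_2 {X : Type*} [MetricSpace X] [ProperSpace X]
    (δ R R' t : ℝ) (hδ : 0 ≤ δ) (hR : 2 * δ < R) (hR' : 2 * δ < R') (ht : 1 ≤ t)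
    (hX : GeodesicSpace X) (hslim : SlimTriangles X δ) (hislim : SlimIdealTriangles X δ)
    (c : ℝ → X) (hc : IsGeodLine c) (s₁ s₂ : ℝ) (hord : s₂ ≤ s₁)
    (hlen : s₁ - s₂ = Real.log t)
    (hring : Shadow c (Metric.closedBall (c s₁) R) ⊆ Shadow c (Metric.closedBall (c s₂) R)) :
    ∃ s₁' s₂' : ℝ, s₂' ≤ s₂ ∧ s₁ ≤ s₁' ∧
      dist (c s₁') (c s₂') = Real.log (Real.exp (R + R' + 2 * δ) * t) ∧
      Shadow c (Metric.closedBall (c s₁') R') ⊆ Shadow c (Metric.closedBall (c s₁) R) ∧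
      Shadow c (Metric.closedBall (c s₂) R) ⊆ Shadow c (Metric.closedBall (c s₂') R') := by
  have hδR : δ ≤ R := le_trans (by linarith) hR.le
  have hδR' : δ ≤ R' := le_trans (by linarith) hR'.le
  have ht0 : (0:ℝ) < t := lt_of_lt_of_le one_pos ht
  have hlogt : 0 ≤ Real.log t := Real.log_nonneg ht
  refine ⟨s₁ + (R' + δ), s₂ - (R + δ), by linarith, by linarith, ?_, ?_, ?_⟩
  · rw [hc]
    have : Real.log (Real.exp (R + R' + 2 * δ) * t)
        = (R + R' + 2 * δ) + Real.log t := by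
      rw [Real.log_mul (Real.exp_ne_zero _) (ne_of_gt ht0), Real.log_exp]
    rw [this, ← hlen, abs_of_nonneg (by linarith)]
    ring
  · -- Shadow c B(c (s₁ + R' + δ)) R' ⊆ Shadow c B(c s₁) R
    rintro γ ⟨hγline, hγasy, u, hu⟩
    refine ⟨hγline, hγasy, ?_⟩
    obtain ⟨f, hf⟩ := hX (c (s₁ + (R' + δ))) (γ u)
    have hd : dist (c (s₁ + (R' + δ))) (γ u) ≤ R' := Metric.mem_closedBall'.mp hu
    obtain ⟨w, hw, hwd⟩ := (hislim c γ hc hγline hγasy (s₁ + (R' + δ)) u f hf).1 s₁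
      (by linarith)
    rcases hw with ⟨v, _, rfl⟩ | ⟨r, hr, rfl⟩
    · exact ⟨v, Metric.mem_closedBall'.mpr (le_trans hwd hδR)⟩
    · -- w = f r on the segment
      refine ⟨u, Metric.mem_closedBall'.mpr ?_⟩
      set d := dist (c (s₁ + (R' + δ))) (γ u) with hdd
      obtain ⟨hf0, hfd, hfiso⟩ := hf
      have hd0 : 0 ≤ d := dist_nonneg
      have h1 : dist (f r) (γ u) = d - r := by
        rw [← hfd]
        rw [hfiso r hr d ⟨hd0, le_refl d⟩, abs_of_nonpos (by linarith [hr.2])]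
        ring
      have h2 : dist (c (s₁ + (R' + δ))) (f r) = r := by
        rw [← hf0, hfiso 0 ⟨le_refl 0, hd0⟩ r hr, abs_of_nonpos (by linarith [hr.1])]
        ring
      have h3 : dist (c s₁) (c (s₁ + (R' + δ))) = R' + δ := by
        rw [hc, abs_of_nonpos (by linarith)]; ring
      have h4 : R' + δ ≤ δ + r := by
        calc R' + δ = dist (c s₁) (c (s₁ + (R' + δ))) := h3.symm
        _ ≤ dist (c s₁) (f r) + dist (f r) (c (s₁ + (R' + δ))) := dist_triangle _ _ _
        _ ≤ δ + r := by rw [dist_comm (f r), h2]; linarith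
      calc dist (c s₁) (γ u) ≤ dist (c s₁) (f r) + dist (f r) (γ u) := dist_triangle _ _ _
      _ ≤ δ + (d - r) := by rw [h1]; linarith
      _ ≤ R := by linarith
  · -- Shadow c B(c s₂) R ⊆ Shadow c B(c (s₂ - (R + δ))) R'
    rintro γ ⟨hγline, hγasy, u, hu⟩
    refine ⟨hγline, hγasy, ?_⟩
    obtain ⟨f, hf⟩ := hX (c s₂) (γ u)
    have hd : dist (c s₂) (γ u) ≤ R := Metric.mem_closedBall'.mp hu
    obtain ⟨w, hw, hwd⟩ := (hislim c γ hc hγline hγasy s₂ u f hf).1 (s₂ - (R + δ))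
      (by linarith)
    rcases hw with ⟨v, _, rfl⟩ | ⟨r, hr, rfl⟩
    · exact ⟨v, Metric.mem_closedBall'.mpr (le_trans hwd hδR')⟩
    · refine ⟨u, Metric.mem_closedBall'.mpr ?_⟩
      set d := dist (c s₂) (γ u) with hdd
      obtain ⟨hf0, hfd, hfiso⟩ := hf
      have hd0 : 0 ≤ d := dist_nonneg
      have h1 : dist (f r) (γ u) = d - r := by
        rw [← hfd, hfiso r hr d ⟨hd0, le_refl d⟩, abs_of_nonpos (by linarith [hr.2])]
        ring
      have h2 : dist (c s₂) (f r) = r := by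
        rw [← hf0, hfiso 0 ⟨le_refl 0, hd0⟩ r hr, abs_of_nonpos (by linarith [hr.1])]
        ring
      have h3 : dist (c (s₂ - (R + δ))) (c s₂) = R + δ := by
        rw [hc, abs_of_nonpos (by linarith)]; ring
      have h4 : R + δ ≤ δ + r := by
        calc R + δ = dist (c (s₂ - (R + δ))) (c s₂) := h3.symm
        _ ≤ dist (c (s₂ - (R + δ))) (f r) + dist (f r) (c s₂) := dist_triangle _ _ _
        _ ≤ δ + r := by rw [dist_comm (f r), h2]; linarith
      calc dist (c (s₂ - (R + δ))) (γ u)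
          ≤ dist (c (s₂ - (R + δ))) (f r) + dist (f r) (γ u) := dist_triangle _ _ _
      _ ≤ δ + (d - r) := by rw [h1]; linarith
      _ ≤ R' := by linarith
end

section
/- Let X be a proper δ-hyperbolic geodesic space, ξ ∈ ∂X, R > 2δ, and a ∈ ∂X \ {ξ}. For any point x on a bi-infinite geodesic [ξ,a] and any point x₁ on [x,a] with d(x₁,x) ≥ R + δ, one has the shadow inclusion O_ξB(x₁,R) ⊆ O_ξB(x,R). Symmetrically, for any x₂ on [x,ξ] with d(x,x₂) ≥ R + δ, one has O_ξB(x,R) ⊆ O_ξB(x₂,R). -/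
lemma shadow_step {X : Type*} [MetricSpace X]
    (δ R : ℝ) (hδ : 0 ≤ δ) (hR : 2 * δ < R)
    (hX : GeodesicSpace X) (hislim : SlimIdealTriangles X δ)
    (c : ℝ → X) (hc : IsGeodLine c) (τ σ : ℝ) (hστ : τ + (R + δ) ≤ σ) :
    Shadow c (Metric.closedBall (c σ) R) ⊆ Shadow c (Metric.closedBall (c τ) R) := by
  rintro γ ⟨hγ, hasymp, t₀, ht₀⟩
  rw [Metric.mem_closedBall] at ht₀
  obtain ⟨f, hf⟩ := hX (c σ) (γ t₀)
  have hd : dist (c σ) (γ t₀) ≤ R := by rw [dist_comm]; exact ht₀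
  have hdnn : (0:ℝ) ≤ dist (c σ) (γ t₀) := dist_nonneg
  obtain ⟨h1, -, -⟩ := hislim c γ hc hγ hasymp σ t₀ f hf
  have hτσ : τ ≤ σ := by linarith
  obtain ⟨w, hw, hdw⟩ := h1 τ hτσ
  refine ⟨hγ, hasymp, ?_⟩
  have hδR : δ ≤ R := by linarith
  rcases hw with h | h
  · obtain ⟨t, -, rfl⟩ := h
    exact ⟨t, by rw [Metric.mem_closedBall, dist_comm]; linarith⟩
  · obtain ⟨u, hu, rfl⟩ := h
    refine ⟨t₀, ?_⟩
    obtain ⟨hf0, hfd, hfiso⟩ := hf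
    have h0u : dist (f 0) (f u) = |0 - u| :=
      hfiso 0 ⟨le_refl 0, hdnn⟩ u hu
    have hud : dist (f u) (f (dist (c σ) (γ t₀))) = |u - dist (c σ) (γ t₀)| :=
      hfiso u hu (dist (c σ) (γ t₀)) ⟨hdnn, le_refl _⟩
    rw [hf0] at h0u
    rw [hfd] at hud
    have h0u' : dist (c σ) (f u) = u := by
      rw [h0u, abs_of_nonpos (by linarith [hu.1])]; ring
    have hud' : dist (f u) (γ t₀) = dist (c σ) (γ t₀) - u := by
      rw [hud, abs_of_nonpos (by linarith [hu.2])]; ring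
    have hστd : dist (c σ) (c τ) = σ - τ := by
      rw [hc σ τ, abs_of_nonneg (by linarith)]
    have t1 := dist_triangle (c σ) (f u) (c τ)
    have t2 := dist_triangle (γ t₀) (f u) (c τ)
    rw [Metric.mem_closedBall]
    rw [dist_comm (c τ) (f u)] at hdw
    rw [dist_comm (γ t₀) (f u)] at t2
    linarith

/-- shadow inclusions along a geodesic `c` from `ξ = c(-∞)` to `a = c(+∞)`.
If `x₁ = c s₁` lies on `[x,a]` with `d(x₁,x) ≥ R+δ` then `O_ξB(x₁,R) ⊆ O_ξB(x,R)`;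
symmetrically for `x₂ = c s₂` on `[x,ξ]` with `d(x,x₂) ≥ R+δ`,
`O_ξB(x,R) ⊆ O_ξB(x₂,R)`. -/
theorem stmt_3 {X : Type*} [MetricSpace X] [ProperSpace X]
    (δ R : ℝ) (hδ : 0 ≤ δ) (hR : 2 * δ < R)
    (hX : GeodesicSpace X) (hslim : SlimTriangles X δ) (hislim : SlimIdealTriangles X δ)
    (c : ℝ → X) (hc : IsGeodLine c) (s s₁ s₂ : ℝ) :
    (s + (R + δ) ≤ s₁ →
      Shadow c (Metric.closedBall (c s₁) R) ⊆ Shadow c (Metric.closedBall (c s) R)) ∧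
    (s₂ ≤ s - (R + δ) →
      Shadow c (Metric.closedBall (c s) R) ⊆ Shadow c (Metric.closedBall (c s₂) R)) := by
  constructor
  · intro h
    exact shadow_step δ R hδ hR hX hislim c hc s s₁ h
  · intro h
    exact shadow_step δ R hδ hR hX hislim c hc s₂ s (by linarith)
end

section
/- Let X be a proper δ-hyperbolic geodesic space, ξ ∈ ∂X, R > 2δ, x ∈ X, and t ≥ e^{2(R+δ)}. Then there exists a t-ring B ⊆ tB in R(ξ,R) such that B ⊆ O_ξB(x,R) ⊆ tB. Concretely: there are points x₁, x₂ on a geodesic from ξ through x, with x₂ between x and ξ, d(x₁,x₂) = ln(t), d(x,x₁) ≥ R + δ, d(x,x₂) ≥ R + δ, and O_ξB(x₁,R) ⊆ O_ξB(x,R) ⊆ O_ξB(x₂,R). -/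
/-- Key geometric lemma: if a line `γ` emanating from `ξ = c(-∞)` comes within `R` of
`c a`, then it comes within `R` of any point `c b` with `b ≤ a`, `a - b ≥ R + δ`. -/
lemma shadow_key {X : Type*} [MetricSpace X] (δ R : ℝ) (hδR : δ ≤ R)
    (hX : GeodesicSpace X) (hislim : SlimIdealTriangles X δ)
    (c γ : ℝ → X) (hc : IsGeodLine c) (hγ : IsGeodLine γ) (hasym : AsympNeg γ c)
    (a b : ℝ) (hba : b ≤ a) (hdist : R + δ ≤ a - b)
    (u₀ : ℝ) (hu₀ : dist (γ u₀) (c a) ≤ R) :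
    ∃ v : ℝ, dist (γ v) (c b) ≤ R := by
  obtain ⟨f, hf⟩ := hX (c a) (γ u₀)
  obtain ⟨h1, -, -⟩ := hislim c γ hc hγ hasym a u₀ f hf
  obtain ⟨w, hw, hdw⟩ := h1 b hba
  rcases hw with ⟨v, -, rfl⟩ | ⟨u, ⟨hu0, huL⟩, rfl⟩
  · exact ⟨v, by rw [dist_comm]; exact hdw.trans hδR⟩
  · -- w = f u on the segment from c a to γ u₀
    set L := dist (c a) (γ u₀) with hL
    have hLR : L ≤ R := by rw [hL, dist_comm]; exact hu₀
    have hfu : dist (f 0) (f u) = u := by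
      have := hf.2.2 0 ⟨le_refl 0, dist_nonneg⟩ u ⟨hu0, huL⟩
      rw [this, abs_of_nonpos (by linarith)]; ring
    have hcb : dist (c b) (c a) = a - b := by
      rw [hc b a, abs_of_nonpos (by linarith)]; ring
    have hRu : R ≤ u := by
      have htri : dist (c b) (c a) ≤ dist (c b) (f u) + dist (f u) (f 0) := by
        rw [hf.1] at *
        exact dist_triangle _ _ _
      rw [hcb, dist_comm (f u) (f 0), hfu] at htri
      linarith
    have huL' : u = L := le_antisymm huL (hLR.trans hRu)
    have hfuγ : f u = γ u₀ := by rw [huL']; exact hf.2.1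
    refine ⟨u₀, ?_⟩
    rw [← hfuγ, dist_comm]
    exact hdw.trans hδR

/-- for `x = c 0` on a geodesic line `c` from `ξ = c(-∞)` and any
`t ≥ e^{2(R+δ)}`, there is a `t`-ring `O_ξB(c s₁,R) ⊆ O_ξB(c s₂,R)` squeezing the shadow
`O_ξB(x,R)`, with `c s₂` between `x` and `ξ`, `d(c s₁, c s₂) = ln t`, and both points at
distance at least `R + δ` from `x`. -/
theorem stmt_12 {X : Type*} [MetricSpace X] [ProperSpace X]
    (δ R t : ℝ) (hδ : 0 ≤ δ) (hR : 2 * δ < R) (ht : Real.exp (2 * (R + δ)) ≤ t)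
    (hX : GeodesicSpace X) (hslim : SlimTriangles X δ) (hislim : SlimIdealTriangles X δ)
    (x : X) (c : ℝ → X) (hc : IsGeodLine c) (hx : c 0 = x) :
    ∃ s₁ s₂ : ℝ, s₂ ≤ 0 ∧ 0 ≤ s₁ ∧ s₁ - s₂ = Real.log t ∧
      R + δ ≤ dist x (c s₁) ∧ R + δ ≤ dist x (c s₂) ∧
      Shadow c (Metric.closedBall (c s₁) R) ⊆ Shadow c (Metric.closedBall x R) ∧
      Shadow c (Metric.closedBall x R) ⊆ Shadow c (Metric.closedBall (c s₂) R) := by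
  have hδR : δ ≤ R := by linarith
  have hRδ0 : 0 ≤ R + δ := by linarith
  have ht0 : 0 < t := lt_of_lt_of_le (Real.exp_pos _) ht
  have hlog : 2 * (R + δ) ≤ Real.log t := (Real.le_log_iff_exp_le ht0).mpr ht
  refine ⟨Real.log t - (R + δ), -(R + δ), by linarith, by linarith, by ring, ?_, ?_, ?_, ?_⟩
  · rw [← hx, hc 0 _, abs_of_nonpos (by linarith)]; linarith
  · rw [← hx, hc 0 _, abs_of_nonneg (by linarith)]; linarith
  · rintro γ ⟨hγ, hasym, u₀, hu₀⟩
    have := shadow_key δ R hδR hX hislim c γ hc hγ hasym (Real.log t - (R + δ)) 0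
      (by linarith) (by linarith) u₀ (Metric.mem_closedBall.mp hu₀)
    obtain ⟨v, hv⟩ := this
    exact ⟨hγ, hasym, v, by rwa [Metric.mem_closedBall, ← hx]⟩
  · rintro γ ⟨hγ, hasym, u₀, hu₀⟩
    have hu₀' : dist (γ u₀) (c 0) ≤ R := by rw [hx]; exact Metric.mem_closedBall.mp hu₀
    have := shadow_key δ R hδR hX hislim c γ hc hγ hasym 0 (-(R + δ))
      (by linarith) (by linarith) u₀ hu₀'
    obtain ⟨v, hv⟩ := this
    exact ⟨hγ, hasym, v, Metric.mem_closedBall.mpr hv⟩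
end
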